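/- For any k ≥ 1 and e ∈ {0,1,...,k-1}, the map f := h ∘ g is a bijection between D_{2k}^e and D_{2k}^{e+1}, and for every x ∈ D_{2k}^e the paths x and f(x) differ in exactly two positions (one U-step is changed to a D-step and one D-step to a U-step). -/

import Mathlib

/-- Value of a step: `true` = U-step (+1), `false` = D-step (-1). -/
def stepVal (b : Bool) : ℤ := if b then 1 else -1

/-- Height of the lattice path `x` after its first `i` steps. -/
def pathHeight (x : List Bool) (i : ℕ) : ℤ := ((x.take i).map stepVal).sum

/-- The step at position `i` (0-indexed) is a U-step. -/
def isU (x : List Bool) (i : ℕ) : Bool := x.getD i true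

/-- The step at position `i` (0-indexed) is a D-step. -/
def isD (x : List Bool) (i : ℕ) : Bool := !(x.getD i true)

/-- Number of flaws: D-steps lying below the line y=0 (i.e. starting at height ≤ 0). -/
def flaws (x : List Bool) : ℕ :=
  ((List.range x.length).filter (fun i => isD x i && decide (pathHeight x i ≤ 0))).length

/-- `DyckSet k e` = the set `D_{2k}^e` of Dyck paths with `2k` steps and `e` flaws. -/
def DyckSet (k e : ℕ) : Set (List Bool) :=
  {x | x.length = 2*k ∧ x.count true = k ∧ flaws x = e}

/-- `LSet k m` = the set `L_{2k,m}` of lattice paths with `2k` steps and `m` U-steps. -/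
def LSet (k m : ℕ) : Set (List Bool) :=
  {x | x.length = 2*k ∧ x.count true = m}

/-- `d_c(x)`: number of D-steps of `x` starting on the line `y = c`. -/
def dstart (x : List Bool) (c : ℤ) : ℕ :=
  ((List.range x.length).filter (fun i => isD x i && decide (pathHeight x i = c))).length

/-- `u_c(x)`: number of U-steps of `x` starting on the line `y = c`. -/
def ustart (x : List Bool) (c : ℤ) : ℕ :=
  ((List.range x.length).filter (fun i => isU x i && decide (pathHeight x i = c))).length

/-- Positions (in increasing order) of D-steps of `x` touching the line `y = c`
(a D-step at position `i` goes from height `pathHeight x i` down to `pathHeight x i - 1`,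
so it touches `y = c` iff its start height is `c` or `c+1`). -/
def dtouch (x : List Bool) (c : ℤ) : List ℕ :=
  (List.range x.length).filter
    (fun i => isD x i && (decide (pathHeight x i = c) || decide (pathHeight x i = c+1)))

/-- Positions (in increasing order) of U-steps of `x` touching the line `y = c`
(a U-step at position `i` goes from height `pathHeight x i` up to `pathHeight x i + 1`,
so it touches `y = c` iff its start height is `c` or `c-1`). -/
def utouch (x : List Bool) (c : ℤ) : List ℕ :=
  (List.range x.length).filter
    (fun i => isU x i && (decide (pathHeight x i = c) || decide (pathHeight x i = c-1)))

/-- Position (0-indexed) flipped by `g`: the `(d_0(x)+1)`-th D-step touching `y=0`. -/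
def gIdx (x : List Bool) : ℕ := (dtouch x 0).getD (dstart x 0) 0

/-- The map `g`: flip the `(d_0(x)+1)`-th D-step of `x` touching the line `y=0`. -/
def gMap (x : List Bool) : List Bool := x.set (gIdx x) true

/-- Position (0-indexed) flipped by `h`: the `u_1(x)`-th U-step touching `y=1`. -/
def hIdx (x : List Bool) : ℕ := (utouch x 1).getD (ustart x 1 - 1) 0

/-- The map `h`: flip the `u_1(x)`-th U-step of `x` touching the line `y=1`. -/
def hMap (x : List Bool) : List Bool := x.set (hIdx x) false

/-- Position (0-indexed) flipped by `g'`: the `d_0(x)`-th D-step touching `y=0`. -/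
def g'Idx (x : List Bool) : ℕ := (dtouch x 0).getD (dstart x 0 - 1) 0

/-- The map `g'`: flip the `d_0(x)`-th D-step of `x` touching the line `y=0`. -/
def g'Map (x : List Bool) : List Bool := x.set (g'Idx x) true

/-- Position (0-indexed) flipped by `h'`: the `(u_1(x)+1)`-th U-step touching `y=1`. -/
def h'Idx (x : List Bool) : ℕ := (utouch x 1).getD (ustart x 1) 0

/-- The map `h'`: flip the `(u_1(x)+1)`-th U-step of `x` touching the line `y=1`. -/
def h'Map (x : List Bool) : List Bool := x.set (h'Idx x) false

/-- The minimum-change map `f := h ∘ g`. -/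
def fMap (x : List Bool) : List Bool := hMap (gMap x)

/-- `piSeq n x`: the sequence of (1-indexed) positions flipped by the successive
applications `g, h, g, h, ...` over `n` applications of `f` starting from `x`. -/
def piSeq : ℕ → List Bool → List ℕ
  | 0, _ => []
  | n+1, x => (gIdx x + 1) :: (hIdx (gMap x) + 1) :: piSeq n (fMap x)

/-- Reverse the step sequence and complement every step. -/
def revComp (x : List Bool) : List Bool := x.reverse.map (fun b => !b)



/-!
Call a step *touching* if it starts at height `0` or `1`; these are the D-steps touching `y = 0`
and the U-steps touching `y = 1`. Everything rests on the crossing identity: on an interval, the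
U-steps from height `c` to `c + 1` minus the D-steps from `c + 1` to `c` are determined by the two
end heights. Applied at the levels `-1`, `0`, `1` it shows that when a touching D-step at
position `j` of a path `w` ending at height `0` is turned into a U-step, the rank of `j` among the
touching U-steps of the new path minus its `u₁` equals the rank of `j` among the touching D-steps
of `w` minus `d₀(w)`. Hence `g` and `h'` are mutually inverse between the paths ending at height
`0` with a D-step at height `1` and the paths `z` ending at height `2`, and so are `g'` and `h`
between the paths ending at height `0` with a flaw and those `z`. For such a `z`, `h` and `h'`
lower two consecutive touching U-steps `q < p`, and counting flaws between `q` and `p` with the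
crossing identity shows that `h z` has exactly one flaw more than `h' z`. So `f = h ∘ g` raises
the number of flaws by one and has the inverse `h' ∘ g'`.
-/

open Finset

theorem getD_set_of_ne {z : List Bool} {i j : ℕ} (h : i ≠ j) (b' : Bool) :
    (z.set j b').getD i true = z.getD i true := by
  simp [List.getD_eq_getElem?_getD, List.getElem?_set_ne h.symm]

theorem getD_set_self {z : List Bool} {j : ℕ} (hj : j < z.length) (b' : Bool) :
    (z.set j b').getD j true = b' := by
  simp [List.getD_eq_getElem?_getD, hj]

theorem set_set_of_getD {z : List Bool} {j : ℕ} {b : Bool} (hj : j < z.length)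
    (h : z.getD j true = b) (b' : Bool) :
    (z.set j b').set j b = z := by
  rw [List.set_set, ← h, List.getD_eq_getElem _ _ hj, List.set_getElem_self]

theorem count_true_set_true {z : List Bool} {j : ℕ} (hj : j < z.length)
    (h : z.getD j true = false) :
    (z.set j true).count true = z.count true + 1 := by
  rw [List.count_set hj, ← List.getD_eq_getElem _ true hj, h]
  simp

theorem count_true_set_false {z : List Bool} {j : ℕ} (hj : j < z.length)
    (h : z.getD j true = true) :
    (z.set j false).count true + 1 = z.count true := by
  have hpos : 0 < z.count true := List.count_pos_iff.2 (by
    rw [← h, List.getD_eq_getElem _ true hj]; exact List.getElem_mem hj)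
  rw [List.count_set hj, ← List.getD_eq_getElem _ true hj, h]
  simp
  omega

section FilterRange

variable {p : ℕ → Bool}

theorem exists_filter_range_eq_append {j n : ℕ} (hjn : j < n) (hj : p j = true) :
    ∃ rest, (List.range n).filter p = (List.range j).filter p ++ j :: rest := by
  obtain ⟨m, rfl⟩ := Nat.exists_eq_add_of_lt hjn
  rw [show j + m + 1 = j + (m + 1) by ring, List.range_add, List.range_succ_eq_map,
    List.map_cons, List.filter_append, List.filter_cons_of_pos (by simpa using hj)]
  exact ⟨_, rfl⟩

theorem getD_filter_range_length {j n : ℕ} (hjn : j < n) (hj : p j = true) (d : ℕ) :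
    ((List.range n).filter p).getD ((List.range j).filter p).length d = j := by
  obtain ⟨rest, h⟩ := exists_filter_range_eq_append hjn hj
  rw [h, List.getD_append_right _ _ _ _ le_rfl, Nat.sub_self]
  rfl

theorem length_filter_range_getD {n m : ℕ} (hm : m < ((List.range n).filter p).length) (d : ℕ) :
    ((List.range (((List.range n).filter p).getD m d)).filter p).length = m := by
  have hmem : ((List.range n).filter p).getD m d ∈ (List.range n).filter p := by
    rw [List.getD_eq_getElem _ _ hm]
    exact List.getElem_mem hm
  generalize hj : ((List.range n).filter p).getD m d = j at hmem ⊢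
  rw [List.mem_filter, List.mem_range] at hmem
  obtain ⟨rest, h⟩ := exists_filter_range_eq_append hmem.1 hmem.2
  have hc : ((List.range j).filter p).length < ((List.range n).filter p).length := by
    rw [h, List.length_append, List.length_cons]
    omega
  have hgetD := getD_filter_range_length hmem.1 hmem.2 d
  have hcm : ((List.range n).filter p)[((List.range j).filter p).length]
      = ((List.range n).filter p)[m] := by
    rw [← List.getD_eq_getElem _ d hc, ← List.getD_eq_getElem _ d hm, hgetD, hj]
  exact ((List.nodup_range.filter p).getElem_inj_iff).1 hcm

end FilterRange

@[simp]
theorem pathHeight_zero (x : List Bool) : pathHeight x 0 = 0 := by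
  simp [pathHeight]

theorem pathHeight_succ {x : List Bool} {i : ℕ} (hi : i < x.length) :
    pathHeight x (i + 1) = pathHeight x i + stepVal (x.getD i true) := by
  rw [pathHeight, pathHeight, List.take_add_one, List.getElem?_eq_getElem hi, List.map_append,
    List.sum_append, List.getD_eq_getElem _ _ hi]
  simp

theorem pathHeight_length (x : List Bool) :
    pathHeight x x.length = x.count true - x.count false := by
  rw [pathHeight, List.take_length]
  induction x with
  | nil => simp
  | cons b x ih => cases b <;> simp [ih, stepVal] <;> ring

theorem pathHeight_set_of_le {x : List Bool} {p i : ℕ} (b : Bool) (hip : i ≤ p) :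
    pathHeight (x.set p b) i = pathHeight x i := by
  rw [pathHeight, pathHeight, List.take_set_of_le hip]

theorem pathHeight_set_of_lt {x : List Bool} {p i : ℕ} (b : Bool) (hpi : p < i)
    (hi : i ≤ x.length) :
    pathHeight (x.set p b) i = pathHeight x i + (stepVal b - stepVal (x.getD p true)) := by
  induction i, hpi using Nat.le_induction with
  | base =>
    have hp : p < x.length := by omega
    rw [pathHeight_succ (by simpa using hp), pathHeight_succ hp, pathHeight_set_of_le b le_rfl,
      getD_set_self hp]
    ring
  | succ i hpi ih =>
    have hi' : i < x.length := by omega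
    rw [pathHeight_succ (by simpa using hi'), pathHeight_succ hi', ih (by omega),
      getD_set_of_ne (by omega)]
    ring

theorem pathHeight_set_length {z : List Bool} {j : ℕ} (hj : j < z.length) (b' : Bool) :
    pathHeight (z.set j b') (z.set j b').length
      = pathHeight z z.length + (stepVal b' - stepVal (z.getD j true)) := by
  rw [List.length_set, pathHeight_set_of_lt b' hj le_rfl]

section StepCount

variable (z : List Bool) (P Q : Bool → ℤ → Prop) [DecidableRel P] [DecidableRel Q]

def stepCount (lo hi : ℕ) : ℕ :=
  #{i ∈ Ico lo hi | P (z.getD i true) (pathHeight z i)}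

variable {z P Q}

theorem stepCount_congr {lo hi : ℕ} (h : ∀ s y, P s y ↔ Q s y) :
    stepCount z P lo hi = stepCount z Q lo hi := by
  simp only [stepCount, h]

theorem stepCount_add {lo mid hi : ℕ} (h₁ : lo ≤ mid) (h₂ : mid ≤ hi) :
    stepCount z P lo mid + stepCount z P mid hi = stepCount z P lo hi := by
  simp only [stepCount, card_filter, sum_Ico_consecutive _ h₁ h₂]

theorem stepCount_single (i : ℕ) :
    stepCount z P i (i + 1) = if P (z.getD i true) (pathHeight z i) then 1 else 0 := by
  rw [stepCount, Nat.Ico_succ_singleton, card_filter, sum_singleton]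

theorem stepCount_eq_add_single_add {lo j hi : ℕ} (hlo : lo ≤ j) (hhi : j < hi) :
    stepCount z P lo hi = stepCount z P lo j
      + (if P (z.getD j true) (pathHeight z j) then 1 else 0) + stepCount z P (j + 1) hi := by
  rw [← stepCount_single, stepCount_add hlo (Nat.le_succ j), stepCount_add (by omega) hhi]

theorem stepCount_or {lo hi : ℕ} (h : ∀ s y, P s y → ¬ Q s y) :
    stepCount z (fun s y => P s y ∨ Q s y) lo hi = stepCount z P lo hi + stepCount z Q lo hi := by
  rw [stepCount, filter_or, card_union_of_disjoint (disjoint_filter.2 fun i _ => h _ _)]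
  rfl

theorem exists_of_stepCount_pos {lo hi : ℕ} (h : 0 < stepCount z P lo hi) :
    ∃ i, lo ≤ i ∧ i < hi ∧ P (z.getD i true) (pathHeight z i) := by
  obtain ⟨i, hi⟩ := card_pos.1 h
  simp only [mem_filter, mem_Ico] at hi
  exact ⟨i, hi.1.1, hi.1.2, hi.2⟩

theorem stepCount_set_of_le {lo hi p : ℕ} (b : Bool) (hp : hi ≤ p) :
    stepCount (z.set p b) P lo hi = stepCount z P lo hi := by
  refine congrArg card (filter_congr fun i hi => ?_)
  have hip : i < p := by simp at hi; omega
  rw [getD_set_of_ne hip.ne, pathHeight_set_of_le b hip.le]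

theorem stepCount_set_of_lt {lo hi p : ℕ} (b : Bool) (hp : p < lo) (hhi : hi ≤ z.length) :
    stepCount (z.set p b) P lo hi =
      stepCount z (fun s y => P s (y + (stepVal b - stepVal (z.getD p true)))) lo hi := by
  refine congrArg card (filter_congr fun i hi => ?_)
  simp only [mem_Ico] at hi
  rw [pathHeight_set_of_lt b (by omega) (by omega), getD_set_of_ne (by omega)]

-- `d` is a separate argument so that the lemma applies verbatim to literal levels like `1`, `2`.
theorem stepCount_up_sub_down (c d : ℤ) (hcd : c + 1 = d) {a b : ℕ} (hab : a ≤ b)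
    (hb : b ≤ z.length) :
    (stepCount z (· = true ∧ · = c) a b : ℤ) - stepCount z (· = false ∧ · = d) a b
      = (if c < pathHeight z b then 1 else 0) - (if c < pathHeight z a then 1 else 0) := by
  subst hcd
  induction b, hab using Nat.le_induction with
  | base => simp [stepCount]
  | succ b hab ih =>
    rw [← stepCount_add hab (Nat.le_succ b), ← stepCount_add hab (Nat.le_succ b),
      stepCount_single, stepCount_single, pathHeight_succ (by omega)]
    have := ih (by omega)
    cases z.getD b true <;> simp [stepVal] <;> split_ifs at this ⊢ <;> omega

theorem length_filter_range_eq_stepCount {p : ℕ → Bool}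
    (hp : ∀ i, p i = true ↔ P (z.getD i true) (pathHeight z i)) (j : ℕ) :
    ((List.range j).filter p).length = stepCount z P 0 j := by
  induction j with
  | zero => simp [stepCount]
  | succ j ih =>
    rw [List.range_succ, List.filter_append, List.length_append, ih,
      ← stepCount_add (Nat.zero_le j) j.le_succ, stepCount_single]
    by_cases h : P (z.getD j true) (pathHeight z j)
    · rw [if_pos h, List.filter_singleton, (hp j).2 h]
      rfl
    · rw [if_neg h, List.filter_singleton, Bool.eq_false_iff.2 (mt (hp j).1 h)]
      rfl

end StepCount

theorem flaws_eq_stepCount (x : List Bool) :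
    flaws x = stepCount x (· = false ∧ · ≤ 0) 0 x.length :=
  length_filter_range_eq_stepCount (fun i => by simp [isD]) _

theorem dstart_eq_stepCount (x : List Bool) (c : ℤ) :
    dstart x c = stepCount x (· = false ∧ · = c) 0 x.length :=
  length_filter_range_eq_stepCount (fun i => by simp [isD]) _

theorem ustart_eq_stepCount (x : List Bool) (c : ℤ) :
    ustart x c = stepCount x (· = true ∧ · = c) 0 x.length :=
  length_filter_range_eq_stepCount (fun i => by simp [isU]) _

theorem count_false_eq_stepCount (x : List Bool) :
    x.count false = stepCount x (fun s _ => s = false) 0 x.length := by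
  have hx : (List.range x.length).map (x.getD · true) = x :=
    List.ext_getElem (by simp) fun i _ hi => by simp [List.getElem?_eq_getElem hi]
  rw [← length_filter_range_eq_stepCount (p := fun i => !x.getD i true) (fun i => by simp)]
  conv_lhs => rw [← hx]
  rw [List.count, List.countP_map, List.countP_eq_length_filter]
  congr 1
  exact List.filter_congr fun i _ => by simp

section Touch

variable {z : List Bool} {b : Bool} {j m : ℕ}

def IsTouchStep (z : List Bool) (b : Bool) (j : ℕ) : Prop :=
  j < z.length ∧ z.getD j true = b ∧ (pathHeight z j = 0 ∨ pathHeight z j = 1)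

def touchCount (z : List Bool) (b : Bool) (lo hi : ℕ) : ℕ :=
  stepCount z (fun s y => s = b ∧ (y = 0 ∨ y = 1)) lo hi

def touchList (z : List Bool) (b : Bool) : List ℕ :=
  (List.range z.length).filter
    fun i => decide (z.getD i true = b ∧ (pathHeight z i = 0 ∨ pathHeight z i = 1))

theorem dtouch_zero (x : List Bool) : dtouch x 0 = touchList x false :=
  List.filter_congr fun i _ => by simp [isD]

theorem utouch_one (x : List Bool) : utouch x 1 = touchList x true :=
  List.filter_congr fun i _ => by simp [isU, Bool.or_comm]

theorem touchCount_eq_add (lo hi : ℕ) :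
    touchCount z b lo hi
      = stepCount z (· = b ∧ · = 0) lo hi + stepCount z (· = b ∧ · = 1) lo hi := by
  rw [touchCount, ← stepCount_or (by rintro s y ⟨-, rfl⟩ ⟨-, h⟩; omega)]
  exact stepCount_congr fun s y => by tauto

theorem length_filter_range_touch (j : ℕ) :
    ((List.range j).filter
      fun i => decide (z.getD i true = b ∧ (pathHeight z i = 0 ∨ pathHeight z i = 1))).length
      = touchCount z b 0 j :=
  length_filter_range_eq_stepCount (fun i => by simp) j

theorem length_touchList : (touchList z b).length = touchCount z b 0 z.length :=
  length_filter_range_touch _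

theorem touchList_getD_touchCount (h : IsTouchStep z b j) :
    (touchList z b).getD (touchCount z b 0 j) 0 = j := by
  rw [← length_filter_range_touch, touchList, getD_filter_range_length h.1 (by simpa using h.2)]

theorem isTouchStep_touchList_getD (hm : m < touchCount z b 0 z.length) :
    IsTouchStep z b ((touchList z b).getD m 0) ∧
      touchCount z b 0 ((touchList z b).getD m 0) = m := by
  rw [← length_touchList] at hm
  have hmem : (touchList z b).getD m 0 ∈ touchList z b := by
    rw [List.getD_eq_getElem _ _ hm]
    exact List.getElem_mem hm
  simp only [touchList, List.mem_filter, List.mem_range, decide_eq_true_eq] at hmem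
  exact ⟨hmem, by rw [← length_filter_range_touch]; exact length_filter_range_getD hm 0⟩

end Touch

section Flips

variable {w x y z : List Bool} {b : Bool} {j : ℕ}

theorem IsTouchStep.set (h : IsTouchStep z b j) (b' : Bool) : IsTouchStep (z.set j b') b' j :=
  ⟨by simpa using h.1, getD_set_self h.1 b',
    by rw [pathHeight_set_of_le b' le_rfl]; exact h.2.2⟩

theorem touchCount_set_of_le {lo hi : ℕ} (b' : Bool) (h : hi ≤ j) :
    touchCount (z.set j b') b lo hi = touchCount z b lo hi :=
  stepCount_set_of_le b' h

theorem stepCount_down_one_pos (hx : pathHeight x x.length = 0) (h : flaws x < x.count false) :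
    0 < stepCount x (· = false ∧ · = 1) 0 x.length := by
  have hsplit : stepCount x (fun s _ => s = false) 0 x.length
      = stepCount x (· = false ∧ · ≤ 0) 0 x.length
        + stepCount x (· = false ∧ 0 < ·) 0 x.length := by
    rw [← stepCount_or fun s y h h' => absurd h.2 (not_le.2 h'.2)]
    exact stepCount_congr fun s y =>
      ⟨fun h => (le_or_gt y 0).imp (⟨h, ·⟩) (⟨h, ·⟩), by rintro (h | h) <;> exact h.1⟩
  rw [flaws_eq_stepCount, count_false_eq_stepCount, hsplit] at h
  obtain ⟨i, -, hi, -, hHi⟩ :=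
    exists_of_stepCount_pos (show 0 < stepCount x (· = false ∧ 0 < ·) 0 x.length by omega)
  have hbefore := stepCount_up_sub_down (z := x) 0 1 rfl (Nat.zero_le i) hi.le
  have htotal := stepCount_up_sub_down (z := x) 0 1 rfl (Nat.zero_le _) le_rfl
  have hU := stepCount_add (z := x) (P := (· = true ∧ · = 0)) (Nat.zero_le i) hi.le
  have hD := stepCount_add (z := x) (P := (· = false ∧ · = 1)) (Nat.zero_le i) hi.le
  simp only [hx, hHi, pathHeight_zero, lt_irrefl, if_true, if_false] at hbefore htotal
  omega

theorem dstart_zero_pos (h : 0 < flaws y) : 0 < dstart y 0 := by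
  rw [flaws_eq_stepCount] at h
  obtain ⟨i, -, hi, hDi, hHi⟩ := exists_of_stepCount_pos h
  have hcross := stepCount_up_sub_down (z := y) (-1) 0 (by norm_num) (Nat.zero_le (i + 1)) hi
  have hsplit := stepCount_add (z := y) (P := (· = false ∧ · = 0)) (Nat.zero_le (i + 1)) hi
  rw [pathHeight_succ hi, hDi] at hcross
  simp only [stepVal, pathHeight_zero, Bool.false_eq_true, if_false] at hcross
  rw [dstart_eq_stepCount]
  split_ifs at hcross <;> omega

theorem touchCount_add_dstart (hw : pathHeight w w.length = 0) (hj : IsTouchStep w false j) :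
    touchCount (w.set j true) true 0 j + dstart w 0
      = ustart (w.set j true) 1 + touchCount w false 0 j := by
  obtain ⟨hjn, hwj, hHj⟩ := hj
  have hu : ustart (w.set j true) 1 = stepCount w (· = true ∧ · = 1) 0 j
      + (if pathHeight w j = 1 then 1 else 0)
      + stepCount w (· = true ∧ · = -1) (j + 1) w.length := by
    rw [ustart_eq_stepCount, List.length_set, stepCount_eq_add_single_add (Nat.zero_le j) hjn,
      stepCount_set_of_le _ le_rfl, stepCount_set_of_lt _ (Nat.lt_add_one j) le_rfl,
      pathHeight_set_of_le _ le_rfl, getD_set_self hjn, hwj]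
    congr 1
    · simp
    · exact stepCount_congr fun s y => by simp [stepVal]; omega
  have hU := stepCount_eq_add_single_add (z := w) (P := (· = true ∧ · = -1)) (Nat.zero_le j) hjn
  have hbelow := stepCount_up_sub_down (z := w) (-1) 0 (by norm_num) (Nat.zero_le j) hjn.le
  have hzero := stepCount_up_sub_down (z := w) 0 1 rfl (Nat.zero_le j) hjn.le
  have htotal := stepCount_up_sub_down (z := w) (-1) 0 (by norm_num) (Nat.zero_le _) le_rfl
  rw [touchCount_set_of_le _ le_rfl, touchCount_eq_add, touchCount_eq_add, dstart_eq_stepCount, hu]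
  rw [hwj] at hU
  rw [hw] at htotal
  rcases hHj with h | h <;> simp [h] at hU hbelow hzero htotal ⊢ <;> omega

theorem touchCount_add_dstart_set_false (hz : pathHeight z z.length = 2)
    (hj : IsTouchStep z true j) :
    touchCount z true 0 j + dstart (z.set j false) 0
      = ustart z 1 + touchCount (z.set j false) false 0 j := by
  have hw : pathHeight (z.set j false) (z.set j false).length = 0 := by
    rw [pathHeight_set_length hj.1, hz, hj.2.1]
    simp [stepVal]
  have key := touchCount_add_dstart hw (hj.set false)
  rwa [set_set_of_getD hj.1 hj.2.1] at key

theorem ustart_one_pos_and_lt (hz : pathHeight z z.length = 2) :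
    0 < ustart z 1 ∧ ustart z 1 < touchCount z true 0 z.length := by
  have h₁ := stepCount_up_sub_down (z := z) 1 2 rfl (Nat.zero_le _) le_rfl
  have h₀ := stepCount_up_sub_down (z := z) 0 1 rfl (Nat.zero_le _) le_rfl
  rw [hz] at h₀ h₁
  norm_num at h₀ h₁
  rw [ustart_eq_stepCount, touchCount_eq_add]
  omega

theorem isTouchStep_gIdx (hd : 0 < stepCount x (· = false ∧ · = 1) 0 x.length) :
    IsTouchStep x false (gIdx x) ∧ touchCount x false 0 (gIdx x) = dstart x 0 := by
  rw [gIdx, dtouch_zero]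
  refine isTouchStep_touchList_getD ?_
  rw [touchCount_eq_add, dstart_eq_stepCount]
  omega

theorem isTouchStep_g'Idx (hd : 0 < dstart y 0) :
    IsTouchStep y false (g'Idx y) ∧ touchCount y false 0 (g'Idx y) + 1 = dstart y 0 := by
  have hlt : dstart y 0 - 1 < touchCount y false 0 y.length := by
    rw [touchCount_eq_add, ← dstart_eq_stepCount]
    omega
  rw [g'Idx, dtouch_zero, (isTouchStep_touchList_getD hlt).2]
  exact ⟨(isTouchStep_touchList_getD hlt).1, by omega⟩

theorem isTouchStep_hIdx (hz : pathHeight z z.length = 2) :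
    IsTouchStep z true (hIdx z) ∧ touchCount z true 0 (hIdx z) + 1 = ustart z 1 := by
  obtain ⟨hpos, hlt⟩ := ustart_one_pos_and_lt hz
  have hspec :=
    isTouchStep_touchList_getD (show ustart z 1 - 1 < touchCount z true 0 z.length by omega)
  rw [hIdx, utouch_one, hspec.2]
  exact ⟨hspec.1, by omega⟩

theorem isTouchStep_h'Idx (hz : pathHeight z z.length = 2) :
    IsTouchStep z true (h'Idx z) ∧ touchCount z true 0 (h'Idx z) = ustart z 1 := by
  rw [h'Idx, utouch_one]
  exact isTouchStep_touchList_getD (ustart_one_pos_and_lt hz).2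

theorem h'Idx_gMap (hx : pathHeight x x.length = 0)
    (hd : 0 < stepCount x (· = false ∧ · = 1) 0 x.length) : h'Idx (gMap x) = gIdx x := by
  obtain ⟨hp, hcount⟩ := isTouchStep_gIdx hd
  have key := touchCount_add_dstart hx hp
  rw [h'Idx, gMap, utouch_one, show ustart (x.set (gIdx x) true) 1
    = touchCount (x.set (gIdx x) true) true 0 (gIdx x) by omega]
  exact touchList_getD_touchCount (hp.set true)

theorem hIdx_g'Map (hy : pathHeight y y.length = 0) (hd : 0 < dstart y 0) :
    hIdx (g'Map y) = g'Idx y := by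
  obtain ⟨hq, hcount⟩ := isTouchStep_g'Idx hd
  have key := touchCount_add_dstart hy hq
  rw [hIdx, g'Map, utouch_one, show ustart (y.set (g'Idx y) true) 1 - 1
    = touchCount (y.set (g'Idx y) true) true 0 (g'Idx y) by omega]
  exact touchList_getD_touchCount (hq.set true)

theorem gIdx_h'Map (hz : pathHeight z z.length = 2) : gIdx (h'Map z) = h'Idx z := by
  obtain ⟨hp, hcount⟩ := isTouchStep_h'Idx hz
  have key := touchCount_add_dstart_set_false hz hp
  rw [gIdx, h'Map, dtouch_zero, show dstart (z.set (h'Idx z) false) 0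
    = touchCount (z.set (h'Idx z) false) false 0 (h'Idx z) by omega]
  exact touchList_getD_touchCount (hp.set false)

theorem g'Idx_hMap (hz : pathHeight z z.length = 2) : g'Idx (hMap z) = hIdx z := by
  obtain ⟨hq, hcount⟩ := isTouchStep_hIdx hz
  have key := touchCount_add_dstart_set_false hz hq
  rw [g'Idx, hMap, dtouch_zero, show dstart (z.set (hIdx z) false) 0 - 1
    = touchCount (z.set (hIdx z) false) false 0 (hIdx z) by omega]
  exact touchList_getD_touchCount (hq.set false)

end Flips

section FlawStep

variable {z : List Bool} {j : ℕ}

theorem flaws_set_false (hj : IsTouchStep z true j) :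
    flaws (z.set j false) = stepCount z (· = false ∧ · ≤ 0) 0 j
      + (if pathHeight z j = 0 then 1 else 0)
      + stepCount z (· = false ∧ · ≤ 2) (j + 1) z.length := by
  obtain ⟨hjn, hzj, hHj⟩ := hj
  rw [flaws_eq_stepCount, List.length_set, stepCount_eq_add_single_add (Nat.zero_le j) hjn,
    stepCount_set_of_le _ le_rfl, stepCount_set_of_lt _ (Nat.lt_add_one j) le_rfl,
    pathHeight_set_of_le _ le_rfl, getD_set_self hjn, hzj]
  congr 1
  · rcases hHj with h | h <;> simp [h]
  · exact stepCount_congr fun s y => by simp [stepVal]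

theorem stepCount_down_le_two (lo hi : ℕ) :
    stepCount z (· = false ∧ · ≤ 2) lo hi = stepCount z (· = false ∧ · ≤ 0) lo hi
      + stepCount z (· = false ∧ · = 1) lo hi + stepCount z (· = false ∧ · = 2) lo hi := by
  rw [← stepCount_or (by omega), ← stepCount_or (by omega)]
  exact stepCount_congr fun s y => by cases s <;> simp; omega

theorem hIdx_lt_h'Idx (hz : pathHeight z z.length = 2) :
    hIdx z < h'Idx z ∧ touchCount z true (hIdx z + 1) (h'Idx z) = 0 := by
  obtain ⟨hq, hcq⟩ := isTouchStep_hIdx hz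
  obtain ⟨-, hcp⟩ := isTouchStep_h'Idx hz
  unfold touchCount at *
  have hlt : hIdx z < h'Idx z := by
    by_contra h
    have := stepCount_add (z := z) (P := fun s y => s = true ∧ (y = 0 ∨ y = 1))
      (Nat.zero_le (h'Idx z)) (not_lt.1 h)
    omega
  have hsplit :=
    stepCount_eq_add_single_add (z := z) (P := fun s y => s = true ∧ (y = 0 ∨ y = 1))
      (Nat.zero_le (hIdx z)) hlt
  rw [if_pos hq.2] at hsplit
  exact ⟨hlt, by omega⟩

theorem flaws_hMap (hz : pathHeight z z.length = 2) : flaws (hMap z) = flaws (h'Map z) + 1 := by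
  obtain ⟨hq, -⟩ := isTouchStep_hIdx hz
  obtain ⟨hp, -⟩ := isTouchStep_h'Idx hz
  obtain ⟨hqp, hbetween⟩ := hIdx_lt_h'Idx hz
  rw [hMap, h'Map, flaws_set_false hq, flaws_set_false hp]
  generalize hIdx z = q, h'Idx z = p at *
  have hL₀ :=
    stepCount_eq_add_single_add (z := z) (P := (· = false ∧ · ≤ 0)) (Nat.zero_le q) hqp
  have hL₂ := stepCount_eq_add_single_add (z := z) (P := (· = false ∧ · ≤ 2)) hqp hp.1
  have hdecomp := stepCount_down_le_two (z := z) (q + 1) p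
  have h₀ := stepCount_up_sub_down (z := z) 0 1 rfl hqp hp.1.le
  have h₁ := stepCount_up_sub_down (z := z) 1 2 rfl hqp hp.1.le
  rw [touchCount_eq_add] at hbetween
  rw [pathHeight_succ hq.1, hq.2.1] at h₀ h₁
  rw [hq.2.1] at hL₀
  rw [hp.2.1] at hL₂
  rcases hq.2.2 with hq₀ | hq₀ <;> rcases hp.2.2 with hp₀ | hp₀ <;>
    simp [stepVal, hq₀, hp₀] at h₀ h₁ hL₀ hL₂ ⊢ <;> omega

end FlawStep

section Inverses

variable {x y z : List Bool}

theorem pathHeight_gMap (hx : pathHeight x x.length = 0)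
    (hd : 0 < stepCount x (· = false ∧ · = 1) 0 x.length) :
    pathHeight (gMap x) (gMap x).length = 2 := by
  obtain ⟨hp, -⟩ := isTouchStep_gIdx hd
  rw [gMap, pathHeight_set_length hp.1, hx, hp.2.1]
  rfl

theorem pathHeight_g'Map (hy : pathHeight y y.length = 0) (hd : 0 < dstart y 0) :
    pathHeight (g'Map y) (g'Map y).length = 2 := by
  obtain ⟨hq, -⟩ := isTouchStep_g'Idx hd
  rw [g'Map, pathHeight_set_length hq.1, hy, hq.2.1]
  rfl

theorem h'Map_gMap (hx : pathHeight x x.length = 0)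
    (hd : 0 < stepCount x (· = false ∧ · = 1) 0 x.length) : h'Map (gMap x) = x := by
  obtain ⟨hp, -⟩ := isTouchStep_gIdx hd
  rw [h'Map, h'Idx_gMap hx hd, gMap, set_set_of_getD hp.1 hp.2.1]

theorem hMap_g'Map (hy : pathHeight y y.length = 0) (hd : 0 < dstart y 0) :
    hMap (g'Map y) = y := by
  obtain ⟨hq, -⟩ := isTouchStep_g'Idx hd
  rw [hMap, hIdx_g'Map hy hd, g'Map, set_set_of_getD hq.1 hq.2.1]

theorem gMap_h'Map (hz : pathHeight z z.length = 2) : gMap (h'Map z) = z := by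
  obtain ⟨hp, -⟩ := isTouchStep_h'Idx hz
  rw [gMap, gIdx_h'Map hz, h'Map, set_set_of_getD hp.1 hp.2.1]

theorem g'Map_hMap (hz : pathHeight z z.length = 2) : g'Map (hMap z) = z := by
  obtain ⟨hq, -⟩ := isTouchStep_hIdx hz
  rw [g'Map, g'Idx_hMap hz, hMap, set_set_of_getD hq.1 hq.2.1]

end Inverses

section MinChange

variable {x y : List Bool} {k e : ℕ}

theorem flaws_fMap (hx : pathHeight x x.length = 0)
    (hd : 0 < stepCount x (· = false ∧ · = 1) 0 x.length) : flaws (fMap x) = flaws x + 1 := by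
  rw [fMap, flaws_hMap (pathHeight_gMap hx hd), h'Map_gMap hx hd]

theorem h'Map_g'Map_fMap (hx : pathHeight x x.length = 0)
    (hd : 0 < stepCount x (· = false ∧ · = 1) 0 x.length) : h'Map (g'Map (fMap x)) = x := by
  rw [fMap, g'Map_hMap (pathHeight_gMap hx hd), h'Map_gMap hx hd]

theorem fMap_h'Map_g'Map (hy : pathHeight y y.length = 0) (hd : 0 < dstart y 0) :
    fMap (h'Map (g'Map y)) = y := by
  rw [fMap, gMap_h'Map (pathHeight_g'Map hy hd), hMap_g'Map hy hd]

theorem exists_two_flips_fMap (hx : pathHeight x x.length = 0)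
    (hd : 0 < stepCount x (· = false ∧ · = 1) 0 x.length) :
    ∃ a b : ℕ, a ≠ b ∧
      x.getD a true = true ∧ (fMap x).getD a true = false ∧
      x.getD b true = false ∧ (fMap x).getD b true = true ∧
      ∀ i, i ≠ a → i ≠ b → x.getD i true = (fMap x).getD i true := by
  have hz := pathHeight_gMap hx hd
  obtain ⟨⟨hbn, hxb, -⟩, -⟩ := isTouchStep_gIdx hd
  obtain ⟨⟨han, hza, -⟩, -⟩ := isTouchStep_hIdx hz
  have hab := (hIdx_lt_h'Idx hz).1
  rw [h'Idx_gMap hx hd] at hab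
  have hfx : fMap x = (x.set (gIdx x) true).set (hIdx (gMap x)) false := rfl
  rw [hfx]
  generalize hIdx (gMap x) = a at *
  rw [gMap] at han hza
  generalize gIdx x = b at *
  rw [getD_set_of_ne hab.ne] at hza
  refine ⟨a, b, hab.ne, hza, getD_set_self han false, hxb, ?_, fun i hia hib => ?_⟩
  · rw [getD_set_of_ne hab.ne', getD_set_self hbn]
  · rw [getD_set_of_ne hia, getD_set_of_ne hib]

theorem pathHeight_length_of_mem_dyckSet (hx : x ∈ DyckSet k e) :
    pathHeight x x.length = 0 := by
  obtain ⟨hlen, hcount, -⟩ := hx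
  have := List.count_true_add_count_false x
  rw [pathHeight_length]
  omega

theorem stepCount_down_one_pos_of_mem_dyckSet (hx : x ∈ DyckSet k e) (he : e < k) :
    0 < stepCount x (· = false ∧ · = 1) 0 x.length := by
  refine stepCount_down_one_pos (pathHeight_length_of_mem_dyckSet hx) ?_
  obtain ⟨hlen, hcount, hflaws⟩ := hx
  have := List.count_true_add_count_false x
  omega

theorem dstart_zero_pos_of_mem_dyckSet (hy : y ∈ DyckSet k (e + 1)) : 0 < dstart y 0 :=
  dstart_zero_pos (by rw [hy.2.2]; omega)

theorem fMap_mem_dyckSet (hx : x ∈ DyckSet k e) (he : e < k) : fMap x ∈ DyckSet k (e + 1) := by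
  have h₀ := pathHeight_length_of_mem_dyckSet hx
  have hd := stepCount_down_one_pos_of_mem_dyckSet hx he
  obtain ⟨hlen, hcount, hflaws⟩ := hx
  obtain ⟨hp, -⟩ := isTouchStep_gIdx hd
  obtain ⟨hq, -⟩ := isTouchStep_hIdx (pathHeight_gMap h₀ hd)
  have hup := count_true_set_true hp.1 hp.2.1
  have hdown := count_true_set_false hq.1 hq.2.1
  refine ⟨by simp [fMap, hMap, gMap, hlen], ?_, by rw [flaws_fMap h₀ hd, hflaws]⟩
  rw [fMap, hMap, gMap] at *
  omega

theorem h'Map_g'Map_mem_dyckSet (hy : y ∈ DyckSet k (e + 1)) :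
    h'Map (g'Map y) ∈ DyckSet k e := by
  have h₀ := pathHeight_length_of_mem_dyckSet hy
  have hd := dstart_zero_pos_of_mem_dyckSet hy
  have hz := pathHeight_g'Map h₀ hd
  obtain ⟨hlen, hcount, hflaws⟩ := hy
  obtain ⟨hq, -⟩ := isTouchStep_g'Idx hd
  obtain ⟨hp, -⟩ := isTouchStep_h'Idx hz
  have hup := count_true_set_true hq.1 hq.2.1
  have hdown := count_true_set_false hp.1 hp.2.1
  have hf := flaws_hMap hz
  rw [hMap_g'Map h₀ hd, hflaws] at hf
  refine ⟨by simp [h'Map, g'Map, hlen], ?_, by omega⟩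
  rw [h'Map, g'Map] at *
  omega

end MinChange

theorem min_change_bijection_general (k e : ℕ) (he : e < k) :
    Set.BijOn fMap (DyckSet k e) (DyckSet k (e+1)) ∧
    ∀ x ∈ DyckSet k e, ∃ a b : ℕ, a ≠ b ∧
      x.getD a true = true ∧ (fMap x).getD a true = false ∧
      x.getD b true = false ∧ (fMap x).getD b true = true ∧
      ∀ i, i ≠ a → i ≠ b → x.getD i true = (fMap x).getD i true := by
  have hleft : ∀ x ∈ DyckSet k e, h'Map (g'Map (fMap x)) = x := fun x hx =>
    h'Map_g'Map_fMap (pathHeight_length_of_mem_dyckSet hx)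
      (stepCount_down_one_pos_of_mem_dyckSet hx he)
  refine ⟨⟨fun x hx => fMap_mem_dyckSet hx he, fun x hx x' hx' hxx' => ?_, fun y hy => ?_⟩,
    fun x hx => exists_two_flips_fMap (pathHeight_length_of_mem_dyckSet hx)
      (stepCount_down_one_pos_of_mem_dyckSet hx he)⟩
  · rw [← hleft x hx, ← hleft x' hx', hxx']
  · exact ⟨_, h'Map_g'Map_mem_dyckSet hy,
      fMap_h'Map_g'Map (pathHeight_length_of_mem_dyckSet hy) (dstart_zero_pos_of_mem_dyckSet hy)⟩

theorem min_change_bijection (k e : ℕ) (hk : 1 ≤ k) (he : e < k) :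
    Set.BijOn fMap (DyckSet k e) (DyckSet k (e+1)) ∧
    ∀ x ∈ DyckSet k e, ∃ a b : ℕ, a ≠ b ∧
      x.getD a true = true ∧ (fMap x).getD a true = false ∧
      x.getD b true = false ∧ (fMap x).getD b true = true ∧
      ∀ i, i ≠ a → i ≠ b → x.getD i true = (fMap x).getD i true :=
  min_change_bijection_general k e he
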